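/- Let q ≥ 2 be an integer and let p be a probability vector on Fin q with a = max i, p i. Then H(p) = h̄_q(a) if and only if there is an index i* with p i* = a and p j = (1 - a) / (q - 1) for every j ≠ i*, i.e. the (q - 1) least likely outcomes of p are equally likely. -/
import Mathlib


/-- `h̄_q(a) = -a log a - (1-a) log((1-a)/(q-1))`, natural log, with the
convention `0 · log 0 = 0` (Mathlib's `Real.log 0 = 0` realizes it). -/
noncomputable def hbar (q : ℕ) (a : ℝ) : ℝ :=
  -a * Real.log a - (1 - a) * Real.log ((1 - a) / ((q : ℝ) - 1))

/-- For a probability vector `p` on `Fin q` (`q ≥ 2`) with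
`a = max i, p i`, we have `H(p) = h̄_q(a)` if and only if there is an index `i*`
with `p i* = a` and `p j = (1 - a)/(q - 1)` for every `j ≠ i*`. -/
theorem stmt_2 (q : ℕ) (hq : 2 ≤ q) (p : Fin q → ℝ)
    (hp0 : ∀ i, 0 ≤ p i) (hp1 : ∑ i, p i = 1)
    (a : ℝ) (ha : a = Finset.univ.sup' ⟨⟨0, by omega⟩, Finset.mem_univ _⟩ p) :
    (-∑ i, p i * Real.log (p i) = hbar q a) ↔
      ∃ istar : Fin q, p istar = a ∧
        ∀ j, j ≠ istar → p j = (1 - a) / ((q : ℝ) - 1) := by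
  have hqR : (0:ℝ) < (q:ℝ) - 1 := by
    have : (2:ℝ) ≤ (q:ℝ) := by exact_mod_cast hq
    linarith
  have hqR' : ((q:ℝ) - 1) ≠ 0 := ne_of_gt hqR
  set m : ℝ := (1 - a) / ((q : ℝ) - 1) with hm
  have hconst : ((q:ℝ)-1) * (m * Real.log m) = (1-a) * Real.log m := by
    rw [← mul_assoc, hm, mul_div_cancel₀ _ hqR']
  have hcard_erase : ∀ i : Fin q, ((Finset.univ.erase i).card : ℝ) = (q:ℝ) - 1 := by
    intro i
    rw [Finset.card_erase_of_mem (Finset.mem_univ i), Finset.card_univ, Fintype.card_fin,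
      Nat.cast_sub (by omega), Nat.cast_one]
  have hsum_erase : ∀ i : Fin q, p i = a → ∑ j ∈ Finset.univ.erase i, p j = 1 - a := by
    intro i hi
    have := Finset.add_sum_erase Finset.univ p (Finset.mem_univ i)
    rw [hp1, hi] at this
    linarith
  obtain ⟨i₀, -, hi₀⟩ := Finset.exists_mem_eq_sup'
    (⟨⟨0, by omega⟩, Finset.mem_univ _⟩ : (Finset.univ : Finset (Fin q)).Nonempty) p
  have hai₀ : p i₀ = a := by rw [ha, hi₀]
  set t : Finset (Fin q) := Finset.univ.erase i₀ with ht
  have hsum_t : ∑ j ∈ t, p j = 1 - a := hsum_erase i₀ hai₀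
  have hmean : ∑ j ∈ t, (1/((q:ℝ)-1)) • p j = m := by
    simp only [smul_eq_mul]
    rw [← Finset.mul_sum, hsum_t, one_div, inv_mul_eq_div]
  have key := Real.strictConvexOn_mul_log.map_sum_eq_iff
    (t := t) (w := fun _ => 1/((q:ℝ)-1)) (p := p)
    (fun i _ => by positivity)
    (by rw [Finset.sum_const, nsmul_eq_mul, hcard_erase]; field_simp)
    (fun i _ => hp0 i)
  rw [hmean] at key
  simp only [smul_eq_mul] at key
  have e1 : ∑ j ∈ t, (1/((q:ℝ)-1)) * (p j * Real.log (p j))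
      = (1/((q:ℝ)-1)) * ∑ j ∈ t, p j * Real.log (p j) := by
    rw [Finset.mul_sum]
  rw [e1] at key
  have key2 : (∑ j ∈ t, p j * Real.log (p j) = (1-a) * Real.log m) ↔ ∀ j ∈ t, p j = m := by
    rw [← key]
    constructor
    · intro h
      rw [h, ← hconst]
      field_simp
    · intro h
      have h2 : ((q:ℝ)-1) * (m * Real.log m)
          = ((q:ℝ)-1) * ((1/((q:ℝ)-1)) * ∑ j ∈ t, p j * Real.log (p j)) := by rw [h]
      rw [hconst] at h2
      field_simp at h2
      linarith
  have hsplit : ∑ i, p i * Real.log (p i)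
      = a * Real.log a + ∑ j ∈ t, p j * Real.log (p j) := by
    rw [← Finset.add_sum_erase Finset.univ _ (Finset.mem_univ i₀), hai₀]
  constructor
  · intro h
    refine ⟨i₀, hai₀, fun j hj => key2.mp ?_ j (Finset.mem_erase.mpr ⟨hj, Finset.mem_univ _⟩)⟩
    rw [hsplit] at h
    unfold hbar at h
    rw [← hm] at h
    linarith
  · rintro ⟨istar, h1, h2⟩
    have hsum' : ∑ i, p i * Real.log (p i)
        = a * Real.log a + ∑ j ∈ Finset.univ.erase istar, p j * Real.log (p j) := by
      rw [← Finset.add_sum_erase Finset.univ _ (Finset.mem_univ istar), h1]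
    have htail : ∑ j ∈ Finset.univ.erase istar, p j * Real.log (p j)
        = (1-a) * Real.log m := by
      have hc : ∀ j ∈ Finset.univ.erase istar, p j * Real.log (p j) = m * Real.log m :=
        fun j hj => by rw [h2 j (Finset.mem_erase.mp hj).1]
      rw [Finset.sum_congr rfl hc, Finset.sum_const, nsmul_eq_mul, hcard_erase, hconst]
    unfold hbar
    rw [← hm]
    linarith
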